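/- For the regular octahedral coordination geometry (k = 6 bonds along ±e₁, ±e₂, ±e₃), the set of bond angles over the 15 unordered bond pairs has exactly 2 elements (π/2 and π), so its extracopularity coefficient is E = log₂(15/2). -/

import Mathlib

open scoped RealInnerProductSpace

noncomputable def v3 (a b c : ℝ) : EuclideanSpace ℝ (Fin 3) := (WithLp.equiv 2 _).symm ![a, b, c]

/-- The regular octahedral coordination geometry: bonds `±e₁, ±e₂, ±e₃`. -/
noncomputable def octS : Set (EuclideanSpace ℝ (Fin 3)) :=
  {v3 1 0 0, v3 (-1) 0 0, v3 0 1 0, v3 0 (-1) 0, v3 0 0 1, v3 0 0 (-1)}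

/-- Set of bond angles of a coordination geometry. -/
def angleSet (S : Set (EuclideanSpace ℝ (Fin 3))) : Set ℝ :=
  {θ | ∃ b ∈ S, ∃ b' ∈ S, b ≠ b' ∧ θ = Real.arccos ⟪b, b'⟫}

lemma inner_v3 (a b c d e f : ℝ) : ⟪v3 a b c, v3 d e f⟫ = a * d + b * e + c * f := by
  simp [v3, PiLp.inner_apply, Fin.sum_univ_three]
  ring

lemma v3_ne_v3 {a b c d e f : ℝ} (h : ¬(a = d ∧ b = e ∧ c = f)) : v3 a b c ≠ v3 d e f := by
  intro he
  have h' : (![a, b, c] : Fin 3 → ℝ) = ![d, e, f] := congrArg (WithLp.equiv 2 _) he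
  exact h ⟨congrFun h' 0, congrFun h' 1, congrFun h' 2⟩

lemma inner_eq_zero_or_eq_neg_one_of_mem_octS {b b' : EuclideanSpace ℝ (Fin 3)}
    (hb : b ∈ octS) (hb' : b' ∈ octS) (hne : b ≠ b') : ⟪b, b'⟫ = 0 ∨ ⟪b, b'⟫ = -1 := by
  simp only [octS, Set.mem_insert_iff, Set.mem_singleton_iff] at hb hb'
  rcases hb with rfl | rfl | rfl | rfl | rfl | rfl <;>
    rcases hb' with rfl | rfl | rfl | rfl | rfl | rfl <;>
    first
      | exact absurd rfl hne
      | (rw [inner_v3]; norm_num)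

lemma angleSet_octS : angleSet octS = {Real.pi / 2, Real.pi} := by
  have e₁_mem : v3 1 0 0 ∈ octS := by simp [octS]
  ext θ
  constructor
  · rintro ⟨b, hb, b', hb', hne, rfl⟩
    rcases inner_eq_zero_or_eq_neg_one_of_mem_octS hb hb' hne with h | h <;>
      simp [h, Real.arccos_zero, Real.arccos_neg_one]
  · rintro (rfl | rfl)
    · refine ⟨v3 1 0 0, e₁_mem, v3 0 1 0, by simp [octS], v3_ne_v3 (by norm_num), ?_⟩
      rw [inner_v3]
      norm_num [Real.arccos_zero]
    · refine ⟨v3 1 0 0, e₁_mem, v3 (-1) 0 0, by simp [octS], v3_ne_v3 (by norm_num), ?_⟩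
      rw [inner_v3]
      norm_num [Real.arccos_neg_one]

lemma ncard_angleSet_octS : (angleSet octS).ncard = 2 := by
  rw [angleSet_octS, Set.ncard_pair]
  linarith [Real.pi_pos]

theorem octahedral_angles :
    angleSet octS = {Real.pi / 2, Real.pi} ∧ (angleSet octS).ncard = 2 ∧
    Real.logb 2 15 - Real.logb 2 ((angleSet octS).ncard) = Real.logb 2 (15 / 2) := by
  refine ⟨angleSet_octS, ncard_angleSet_octS, ?_⟩
  rw [ncard_angleSet_octS, Real.logb_div (by norm_num) (by norm_num)]
  norm_num
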